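/- arXiv:1403.1505 — 2 statements merged into one kernel-verified Lean document; each statement's English description precedes it below -/
import Mathlib

section
/- Let φ be an N-function and w a weight on I. Then for every f ∈ L⁰(I), ‖f‖_{ρ_φ(M_W,L¹)} = ‖f‖_{M_{φ,w}}, i.e. inf{ max(‖g‖_{M_W}, ‖h‖_{L¹}) : g, h ∈ L⁰(I), f* = ρ_φ(|g|,|h|) } = inf{ λ > 0 : P_{φ,w}(f/λ) ≤ 1 }. -/
open MeasureTheory Set Filter
open scoped ENNReal Pointwise

noncomputable section

/-- The decreasing rearrangement of `f` with respect to Lebesgue measure on `I`. -/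
def decRearr (I : Set ℝ) (f : ℝ → ℝ) (t : ℝ) : ℝ :=
  sInf {l : ℝ | 0 < l ∧ volume {s | s ∈ I ∧ l < |f s|} ≤ ENNReal.ofReal t}

/-- `φ(a/b)·b` with the convention `φ(c/0)·0 = 0` if `c = 0` and `= ∞` if `c ≠ 0`. -/
def phiRatio (φ : ℝ → ℝ) (a b : ℝ) : ℝ≥0∞ :=
  if b = 0 then (if a = 0 then 0 else ⊤) else ENNReal.ofReal (φ (a / b) * b)

/-- Submajorization `g ≺ w` on `I` : `∫₀ᵗ g* ≤ ∫₀ᵗ w` for all `t ∈ I`. -/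
def Submaj (I : Set ℝ) (w g : ℝ → ℝ) : Prop :=
  ∀ t ∈ I, ∫⁻ s in Ioo (0:ℝ) t, ENNReal.ofReal (decRearr I g s)
      ≤ ∫⁻ s in Ioo (0:ℝ) t, ENNReal.ofReal (w s)

/-- The modular `P_{φ,w}(f) = inf { ∫_I φ(f*/|g|)|g| : g ≺ w }`. -/
def Pmod (I : Set ℝ) (φ w f : ℝ → ℝ) : ℝ≥0∞ :=
  sInf { v : ℝ≥0∞ | ∃ g : ℝ → ℝ, Measurable g ∧ Submaj I w g ∧
      v = ∫⁻ t in I, phiRatio φ (decRearr I f t) |g t| }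

/-- The modular `I_{φ,w}(f) = ∫_I φ(f*) w`. -/
def Imod (I : Set ℝ) (φ w f : ℝ → ℝ) : ℝ≥0∞ :=
  ∫⁻ t in I, ENNReal.ofReal (φ (decRearr I f t) * w t)

/-- The Marcinkiewicz norm `‖g‖_{M_W} = sup_{t ∈ I, t > 0} (∫₀ᵗ g*)/W(t)`. -/
def MWnorm (I : Set ℝ) (w g : ℝ → ℝ) : ℝ≥0∞ :=
  ⨆ t ∈ I ∩ Ioi (0:ℝ),
    (∫⁻ s in Ioo (0:ℝ) t, ENNReal.ofReal (decRearr I g s)) /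
      ENNReal.ofReal (∫ s in Ioo (0:ℝ) t, w s)

/-- An Orlicz function: `φ(0) = 0`, `φ` convex, strictly increasing, `[0,∞) → [0,∞)`. -/
def OrliczOn (φ : ℝ → ℝ) : Prop :=
  φ 0 = 0 ∧ ConvexOn ℝ (Ici 0) φ ∧ StrictMonoOn φ (Ici 0) ∧ ∀ t, 0 ≤ t → 0 ≤ φ t

/-- An N-function: an Orlicz function with `φ(t)/t → 0` at `0⁺` and `φ(t)/t → ∞` at `∞`. -/
def NFun (φ : ℝ → ℝ) : Prop :=
  OrliczOn φ ∧ Tendsto (fun t => φ t / t) (nhdsWithin 0 (Ioi 0)) (nhds 0) ∧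
    Tendsto (fun t => φ t / t) atTop atTop

/-- The complementary function `φ*(s) = sup_{t ≥ 0} (st - φ(t))`. -/
def phiStar (φ : ℝ → ℝ) (s : ℝ) : ℝ := sSup ((fun t => s * t - φ t) '' Ici 0)

/-- The (generalized) inverse of an Orlicz function. -/
def phiInv (φ : ℝ → ℝ) (s : ℝ) : ℝ := sInf {t : ℝ | 0 ≤ t ∧ s ≤ φ t}

/-- The Calderón–Lozanovskii function `ρ_φ(t,s) = φ⁻¹(s/t)·t`. -/
def rhoFun (φ : ℝ → ℝ) (t s : ℝ) : ℝ := phiInv φ (s / t) * t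

/-- A weight on `I`: positive, decreasing and locally integrable. -/
def IsWeight (I : Set ℝ) (w : ℝ → ℝ) : Prop :=
  (∀ t ∈ I, 0 < w t) ∧ AntitoneOn w I ∧ ∀ t ∈ I, IntegrableOn w (Ioo 0 t)

/-- `I = [0,α)` with `0 < α ≤ ∞`. -/
def OLDomain (I : Set ℝ) : Prop := I = Ici 0 ∨ ∃ α : ℝ, 0 < α ∧ I = Ico 0 α

/-- The step function `Σ aᵢ χ_{[tᵢ₋₁,tᵢ)}`. -/
def stepFun (n : ℕ) (tt : Fin (n+1) → ℝ) (a : Fin n → ℝ) (s : ℝ) : ℝ :=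
  ∑ i : Fin n, if tt i.castSucc ≤ s ∧ s < tt i.succ then a i else 0

/-- `R(a,b) = F(a,b)/W(a,b)` where `F(a,b) = ∫_a^b f`, `W(a,b) = ∫_a^b w`. -/
def Rquot (w f : ℝ → ℝ) (a b : ℝ) : ℝ :=
  (∫ s in Ioo a b, f s) / (∫ s in Ioo a b, w s)

/-- `(a,b)` is a level interval of `f` with respect to `w`. -/
def IsLI (I : Set ℝ) (w f : ℝ → ℝ) (a b : ℝ) : Prop :=
  0 ≤ a ∧ a < b ∧ Ioo a b ⊆ I ∧ 0 < Rquot w f a b ∧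
    ∀ t ∈ Ioo a b, Rquot w f a t ≤ Rquot w f a b

/-- `(a,b)` is a maximal level interval of `f` with respect to `w`. -/
def IsMLI (I : Set ℝ) (w f : ℝ → ℝ) (a b : ℝ) : Prop :=
  IsLI I w f a b ∧ ∀ a' b', IsLI I w f a' b' → Ioo a b ⊆ Ioo a' b' → a = a' ∧ b = b'

/-- `f0` is a level function of `f` with respect to `w`. -/
def IsLevelFun (I : Set ℝ) (w f f0 : ℝ → ℝ) : Prop :=
  (∀ a b, IsMLI I w f a b → ∀ t ∈ Ioo a b, f0 t = Rquot w f a b * w t) ∧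
  (∀ t ∈ I, (∀ a b, IsMLI I w f a b → t ∉ Ioo a b) → f0 t = f t)

/-- The Köthe dual norm of the Orlicz–Lorentz space `Λ_{φ,w}` with the Luxemburg norm. -/
def KDnorm (I : Set ℝ) (φ w f : ℝ → ℝ) : ℝ≥0∞ :=
  sSup { v : ℝ≥0∞ | ∃ g : ℝ → ℝ, Measurable g ∧
      ({ε : ℝ | 0 < ε ∧ Imod I φ w (fun t => g t / ε) ≤ 1}).Nonempty ∧
      sInf {ε : ℝ | 0 < ε ∧ Imod I φ w (fun t => g t / ε) ≤ 1} ≤ 1 ∧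
      IntegrableOn (fun t => f t * g t) I ∧
      v = ENNReal.ofReal (∫ t in I, f t * g t) }

lemma decRearr_nonneg (I : Set ℝ) (f : ℝ → ℝ) (t : ℝ) : 0 ≤ decRearr I f t :=
  Real.sInf_nonneg (fun _ hx => hx.1.le)

lemma decRearr_measurable (I : Set ℝ) (u : ℝ → ℝ) : Measurable (decRearr I u) := by
  have hA : ∀ v : ℝ≥0∞, MeasurableSet {t : ℝ | v ≤ ENNReal.ofReal t} := by
    intro v
    exact measurableSet_le measurable_const ENNReal.measurable_ofReal
  apply measurable_of_Iio
  intro c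
  rcases le_or_gt c 0 with hc | hc
  · have : decRearr I u ⁻¹' Iio c = ∅ := by
      ext t
      simp only [mem_preimage, mem_Iio, mem_empty_iff_false, iff_false, not_lt]
      exact le_trans hc (decRearr_nonneg I u t)
    rw [this]; exact MeasurableSet.empty
  · set vol : ℝ → ℝ≥0∞ := fun l => volume {s | s ∈ I ∧ l < |u s|} with hvol
    have hmono : ∀ {l l' : ℝ}, l ≤ l' → vol l' ≤ vol l := by
      intro l l' h
      apply measure_mono
      intro s hs
      exact ⟨hs.1, lt_of_le_of_lt h hs.2⟩
    have key : decRearr I u ⁻¹' Iio c =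
        (⋃ (q : ℚ) (_ : 0 < (q:ℝ)), {t : ℝ | vol q ≤ ENNReal.ofReal t})ᶜ ∪
        ⋃ (q : ℚ) (_ : 0 < (q:ℝ) ∧ (q:ℝ) < c), {t : ℝ | vol q ≤ ENNReal.ofReal t} := by
      ext t
      simp only [mem_preimage, mem_Iio, mem_union, mem_compl_iff, mem_iUnion, mem_setOf_eq,
        not_exists]
      set S := {l : ℝ | 0 < l ∧ vol l ≤ ENNReal.ofReal t} with hS
      have hbdd : BddBelow S := ⟨0, fun x hx => hx.1.le⟩
      constructor
      · intro hlt
        rcases eq_empty_or_nonempty S with hemp | hne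
        · left
          intro q hq hvq
          have : (q:ℝ) ∈ S := ⟨hq, hvq⟩
          rw [hemp] at this; exact this
        · right
          obtain ⟨l, hlS, hlc⟩ := exists_lt_of_csInf_lt hne hlt
          obtain ⟨q, hq1, hq2⟩ := exists_rat_btwn hlc
          exact ⟨q, ⟨lt_trans hlS.1 hq1, hq2⟩, le_trans (hmono hq1.le) hlS.2⟩
      · rintro (hemp | ⟨q, ⟨hq0, hqc⟩, hvq⟩)
        · have : S = ∅ := by
            ext l
            simp only [mem_empty_iff_false, iff_false, hS, mem_setOf_eq]
            rintro ⟨hl0, hvl⟩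
            obtain ⟨q, hq1, hq2⟩ := exists_rat_btwn (lt_add_one l)
            exact hemp q (lt_trans hl0 hq1) (le_trans (hmono hq1.le) hvl)
          show sInf S < c
          rw [this, Real.sInf_empty]; exact hc
        · calc sInf S ≤ (q:ℝ) := csInf_le hbdd ⟨hq0, hvq⟩
            _ < c := hqc
    rw [key]
    refine MeasurableSet.union ?_ ?_
    · exact (MeasurableSet.iUnion (fun q => MeasurableSet.iUnion (fun _ => hA _))).compl
    · exact MeasurableSet.iUnion (fun q => MeasurableSet.iUnion (fun _ => hA _))
lemma decRearr_congr {I : Set ℝ} {u v : ℝ → ℝ} (h : ∀ s, |u s| = |v s|) :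
    decRearr I u = decRearr I v := by
  unfold decRearr; funext t; congr 1; ext l; simp only [mem_setOf_eq, h]

lemma decRearr_smul {I : Set ℝ} {f : ℝ → ℝ} {c : ℝ} (hc : 0 < c) (t : ℝ) :
    decRearr I (fun s => c * f s) t = c * decRearr I f t := by
  unfold decRearr
  have hset : {l : ℝ | 0 < l ∧ volume {s | s ∈ I ∧ l < |c * f s|} ≤ ENNReal.ofReal t}
      = c • {l : ℝ | 0 < l ∧ volume {s | s ∈ I ∧ l < |f s|} ≤ ENNReal.ofReal t} := by
    ext l
    rw [mem_smul_set_iff_inv_smul_mem₀ (ne_of_gt hc)]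
    simp only [mem_setOf_eq, smul_eq_mul]
    have habs : ∀ s : ℝ, (l < |c * f s|) ↔ (c⁻¹ * l < |f s|) := by
      intro s
      rw [abs_mul, abs_of_pos hc, inv_mul_lt_iff₀ hc]
    constructor
    · rintro ⟨hl, hv⟩
      exact ⟨by positivity, by simpa only [habs] using hv⟩
    · rintro ⟨hl, hv⟩
      have hl' : 0 < l := by
        have h2 := mul_pos hc hl
        rwa [mul_inv_cancel_left₀ (ne_of_gt hc)] at h2
      exact ⟨hl', by simpa only [habs] using hv⟩
  rw [hset, Real.sInf_smul_of_nonneg hc.le, smul_eq_mul]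


lemma OLDomain.Ioo_subset {I : Set ℝ} (hI : OLDomain I) {t : ℝ} (ht : t ∈ I) :
    Ioo 0 t ⊆ I := by
  rcases hI with rfl | ⟨α, hα, rfl⟩
  · exact fun s hs => le_of_lt hs.1
  · exact fun s hs => ⟨hs.1.le, lt_trans hs.2 ht.2⟩

lemma lint_w {I : Set ℝ} {w : ℝ → ℝ} (hI : OLDomain I) (hw : IsWeight I w)
    {t : ℝ} (ht : t ∈ I) (ht0 : 0 < t) :
    0 < ∫ s in Ioo 0 t, w s ∧
      (∫⁻ s in Ioo (0:ℝ) t, ENNReal.ofReal (w s)) = ENNReal.ofReal (∫ s in Ioo 0 t, w s) := by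
  have hsub : Ioo 0 t ⊆ I := hI.Ioo_subset ht
  have hint : IntegrableOn w (Ioo 0 t) := hw.2.2 t ht
  have hpos_ae : 0 ≤ᶠ[ae (volume.restrict (Ioo 0 t))] w := by
    rw [Filter.EventuallyLE, ae_restrict_iff' measurableSet_Ioo]
    exact ae_of_all _ (fun s hs => (hw.1 s (hsub hs)).le)
  constructor
  · rw [setIntegral_pos_iff_support_of_nonneg_ae hpos_ae hint]
    refine lt_of_lt_of_le ?_ (measure_mono (fun s hs => ⟨ne_of_gt (hw.1 s (hsub hs)), hs⟩))
    rw [Real.volume_Ioo]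
    simpa using ENNReal.ofReal_pos.mpr ht0
  · exact (ofReal_integral_eq_lintegral_ofReal hint hpos_ae).symm

variable {φ : ℝ → ℝ}

lemma phiInv_phi (hφ : NFun φ) {x : ℝ} (hx : 0 ≤ x) : phiInv φ (φ x) = x := by
  have hset : {t : ℝ | 0 ≤ t ∧ φ x ≤ φ t} = Ici x := by
    ext t
    simp only [mem_setOf_eq, mem_Ici]
    constructor
    · rintro ⟨ht0, hft⟩
      by_contra hlt
      push_neg at hlt
      exact absurd hft (not_le.mpr (hφ.1.2.2.1 ht0 hx hlt))
    · intro hxt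
      exact ⟨le_trans hx hxt, hφ.1.2.2.1.monotoneOn hx (le_trans hx hxt) hxt⟩
  rw [phiInv, hset, csInf_Ici]

lemma phiInv_zero (hφ : NFun φ) : phiInv φ 0 = 0 := by
  have := phiInv_phi hφ (le_refl 0)
  rwa [hφ.1.1] at this

lemma NFun.tendsto_zero (hφ : NFun φ) : Tendsto φ (nhdsWithin 0 (Ioi 0)) (nhds 0) := by
  have h1 : Tendsto (fun t => (φ t / t) * t) (nhdsWithin 0 (Ioi 0)) (nhds 0) := by
    have hid : Tendsto (fun t : ℝ => t) (nhdsWithin 0 (Ioi 0)) (nhds 0) :=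
      tendsto_nhdsWithin_of_tendsto_nhds (f := fun t : ℝ => t) tendsto_id
    simpa using hφ.2.1.mul hid
  refine h1.congr' ?_
  filter_upwards [self_mem_nhdsWithin] with t ht
  exact div_mul_cancel₀ (φ t) (ne_of_gt ht)

lemma NFun.continuousOn (hφ : NFun φ) : ContinuousOn φ (Ici 0) := by
  have hconv : ConvexOn ℝ (Ioi 0) φ := hφ.1.2.1.subset Ioi_subset_Ici_self (convex_Ioi 0)
  have hIoi : ContinuousOn φ (Ioi 0) := hconv.continuousOn isOpen_Ioi
  intro x hx
  rcases eq_or_lt_of_le (mem_Ici.mp hx) with h0 | h0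
  · rw [ContinuousWithinAt, ← h0]
    have : Ici (0:ℝ) = insert 0 (Ioi 0) := (Set.Ioi_insert (a := (0:ℝ))).symm
    rw [this, nhdsWithin_insert]
    rw [hφ.1.1]
    exact Tendsto.sup (by simpa [hφ.1.1] using tendsto_pure_nhds φ (0:ℝ)) hφ.tendsto_zero
  · exact (hIoi.continuousAt (Ioi_mem_nhds h0)).continuousWithinAt

lemma NFun.surj (hφ : NFun φ) {u : ℝ} (hu : 0 ≤ u) : ∃ x, 0 ≤ x ∧ φ x = u := by
  obtain ⟨T, hT1, hT2⟩ := ((hφ.2.2.eventually_ge_atTop u).and (eventually_ge_atTop (1:ℝ))).exists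
  have hT0 : 0 < T := lt_of_lt_of_le one_pos hT2
  have hφT : u ≤ φ T := by
    have : φ T = (φ T / T) * T := (div_mul_cancel₀ (φ T) (ne_of_gt hT0)).symm
    rw [this]
    calc u = u * 1 := (mul_one u).symm
      _ ≤ (φ T / T) * T := mul_le_mul hT1 hT2 one_pos.le (le_trans hu hT1)
  have hcont : ContinuousOn φ (Icc 0 T) := hφ.continuousOn.mono Icc_subset_Ici_self
  have := intermediate_value_Icc hT0.le hcont
  have hmem : u ∈ Icc (φ 0) (φ T) := by
    rw [hφ.1.1]; exact ⟨hu, hφT⟩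
  obtain ⟨x, hx, hfx⟩ := this hmem
  exact ⟨x, hx.1, hfx⟩

lemma phi_phiInv (hφ : NFun φ) {u : ℝ} (hu : 0 ≤ u) : φ (phiInv φ u) = u := by
  obtain ⟨x, hx0, hfx⟩ := hφ.surj hu
  rw [← hfx, phiInv_phi hφ hx0, hfx]

lemma NFun.monoMax (hφ : NFun φ) : Monotone (fun x => φ (max x 0)) := by
  intro a b hab
  exact hφ.1.2.2.1.monotoneOn (le_max_right a 0) (le_max_right b 0)
    (max_le_max hab (le_refl 0))

theorem statement3 (I : Set ℝ) (hI : OLDomain I) (φ w : ℝ → ℝ)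
    (hφ : NFun φ) (hw : IsWeight I w) (f : ℝ → ℝ) (hf : Measurable f) :
    sInf { v : ℝ≥0∞ | ∃ g h : ℝ → ℝ, Measurable g ∧ Measurable h ∧
        (∀ᵐ t ∂(volume.restrict I), decRearr I f t = rhoFun φ |g t| |h t|) ∧
        v = max (MWnorm I w g) (∫⁻ t in I, ENNReal.ofReal |h t|) }
    = sInf { v : ℝ≥0∞ | ∃ l : ℝ, 0 < l ∧
        Pmod I φ w (fun t => f t / l) ≤ 1 ∧ v = ENNReal.ofReal l } := by
  apply le_antisymm
  · -- LHS ≤ RHS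
    apply le_sInf
    rintro v ⟨l, hl, hP, rfl⟩
    apply ENNReal.le_of_forall_pos_le_add
    intro ε hε _
    set δ : ℝ := (ε : ℝ) / l with hδdef
    have hδ : 0 < δ := div_pos (by exact_mod_cast hε) hl
    have h1lt : (1:ℝ≥0∞) < 1 + ENNReal.ofReal δ :=
      ENNReal.lt_add_right ENNReal.one_ne_top (ne_of_gt (ENNReal.ofReal_pos.mpr hδ))
    have hPlt : Pmod I φ w (fun t => f t / l) < 1 + ENNReal.ofReal δ := lt_of_le_of_lt hP h1lt
    rw [Pmod] at hPlt
    obtain ⟨v', hv'mem, hv'lt⟩ := sInf_lt_iff.mp hPlt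
    obtain ⟨g₀, hg₀m, hg₀sub, rfl⟩ := hv'mem
    set Fl : ℝ → ℝ := decRearr I (fun t => f t / l) with hFl
    have hFl_nonneg : ∀ t, 0 ≤ Fl t := decRearr_nonneg I _
    have hFlm : Measurable Fl := decRearr_measurable I _
    have hFscale : ∀ t, decRearr I f t = l * Fl t := by
      intro t
      have hfun : (fun s => f s / l) = fun s => l⁻¹ * f s := by
        funext s; rw [div_eq_inv_mul]
      rw [hFl, hfun, decRearr_smul (inv_pos.mpr hl), ← mul_assoc,
        mul_inv_cancel₀ (ne_of_gt hl), one_mul]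
    set Φm : ℝ → ℝ := fun x => φ (max x 0) with hΦm
    have hΦmm : Measurable Φm := hφ.monoMax.measurable
    have hΦnn : ∀ x, 0 ≤ Φm x := fun x => hφ.1.2.2.2 _ (le_max_right _ _)
    set G : ℝ → ℝ := fun t => l * |g₀ t| with hG
    set h : ℝ → ℝ := fun t => if g₀ t = 0 then 0 else l * (Φm (Fl t / |g₀ t|) * |g₀ t|)
      with hhdef
    have hGm : Measurable G := measurable_const.mul hg₀m.abs
    have hhm : Measurable h := by
      apply Measurable.ite (hg₀m (measurableSet_singleton 0)) measurable_const
      exact measurable_const.mul ((hΦmm.comp (hFlm.div hg₀m.abs)).mul hg₀m.abs)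
    set M : ℝ → ℝ≥0∞ := fun t =>
      if |g₀ t| = 0 then (if Fl t = 0 then 0 else ⊤)
      else ENNReal.ofReal (Φm (Fl t / |g₀ t|) * |g₀ t|) with hM
    have hMeq : ∀ t, phiRatio φ (Fl t) |g₀ t| = M t := by
      intro t
      rw [phiRatio, hM]
      rcases eq_or_ne (|g₀ t|) 0 with h0 | h0
      · simp [h0]
      · simp only [if_neg h0]
        have : max (Fl t / |g₀ t|) 0 = Fl t / |g₀ t| :=
          max_eq_left (div_nonneg (hFl_nonneg t) (abs_nonneg _))
        rw [hΦm]
        simp only [this]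
    have hMm : Measurable M := by
      apply Measurable.ite (hg₀m.abs (measurableSet_singleton 0))
      · exact Measurable.ite (hFlm (measurableSet_singleton 0)) measurable_const
          measurable_const
      · exact ((hΦmm.comp (hFlm.div hg₀m.abs)).mul hg₀m.abs).ennreal_ofReal
    have hVeq : (∫⁻ t in I, phiRatio φ (Fl t) |g₀ t|) = ∫⁻ t in I, M t :=
      lintegral_congr (fun t => hMeq t)
    rw [hVeq] at hv'lt
    have hfin : (∫⁻ t in I, M t) ≠ ⊤ := (lt_of_lt_of_le hv'lt le_top).ne
    have hae0 : ∀ᵐ t ∂(volume.restrict I), g₀ t = 0 → Fl t = 0 := by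
      filter_upwards [ae_lt_top hMm hfin] with t hMt h0
      by_contra hF
      rw [hM] at hMt
      simp only [abs_eq_zero.mpr h0, if_pos rfl, if_neg hF] at hMt
      exact absurd hMt (lt_irrefl ⊤)
    have haeid : ∀ᵐ t ∂(volume.restrict I), decRearr I f t = rhoFun φ |G t| |h t| := by
      filter_upwards [hae0] with t h0imp
      rcases eq_or_ne (g₀ t) 0 with hg0 | hg0
      · have hF0 := h0imp hg0
        have hGt : G t = 0 := by rw [hG]; simp [hg0]
        have hht : h t = 0 := by rw [hhdef]; simp [hg0]
        rw [hFscale t, hF0, mul_zero, rhoFun, hGt, hht]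
        simp
      · have ha0 : 0 < |g₀ t| := abs_pos.mpr hg0
        have hx0 : 0 ≤ Fl t / |g₀ t| := div_nonneg (hFl_nonneg t) ha0.le
        have hGt : |G t| = l * |g₀ t| := by
          rw [hG]; exact abs_of_nonneg (by positivity)
        have hht : |h t| = l * (Φm (Fl t / |g₀ t|) * |g₀ t|) := by
          rw [hhdef]; simp only [if_neg hg0]
          exact abs_of_nonneg (mul_nonneg hl.le (mul_nonneg (hΦnn _) (abs_nonneg _)))
        rw [rhoFun, hGt, hht]
        have hdiv : l * (Φm (Fl t / |g₀ t|) * |g₀ t|) / (l * |g₀ t|) = Φm (Fl t / |g₀ t|) := by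
          rw [mul_div_mul_left _ _ (ne_of_gt hl), mul_div_cancel_right₀ _ (ne_of_gt ha0)]
        rw [hdiv]
        have hΦeq : Φm (Fl t / |g₀ t|) = φ (Fl t / |g₀ t|) := by
          rw [hΦm]; simp only [max_eq_left hx0]
        rw [hΦeq, phiInv_phi hφ hx0, hFscale t, div_mul_eq_mul_div,
          mul_comm l (|g₀ t|), mul_div_assoc, mul_div_cancel_left₀ _ (ne_of_gt ha0)]
        ring
    refine le_trans (sInf_le ⟨G, h, hGm, hhm, haeid, rfl⟩) (max_le ?_ ?_)
    · -- MWnorm part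
      refine le_trans ?_ le_self_add
      rw [MWnorm]
      apply iSup₂_le
      rintro t ⟨htI, ht0⟩
      have hDW := lint_w hI hw htI ht0
      set D := ENNReal.ofReal (∫ s in Ioo 0 t, w s) with hD
      have hdec : ∀ s, decRearr I G s = l * decRearr I g₀ s := by
        intro s
        rw [hG, decRearr_congr (v := fun u => l * g₀ u)
          (fun u => by rw [abs_mul, abs_abs, abs_mul])]
        exact decRearr_smul hl s
      calc (∫⁻ s in Ioo (0:ℝ) t, ENNReal.ofReal (decRearr I G s)) / D
          ≤ (ENNReal.ofReal l * (∫⁻ s in Ioo (0:ℝ) t, ENNReal.ofReal (w s))) / D := by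
            apply ENNReal.div_le_div_right
            have hcongr : (∫⁻ s in Ioo (0:ℝ) t, ENNReal.ofReal (decRearr I G s))
                = ENNReal.ofReal l * ∫⁻ s in Ioo (0:ℝ) t, ENNReal.ofReal (decRearr I g₀ s) := by
              rw [← lintegral_const_mul _ ((decRearr_measurable I g₀).ennreal_ofReal)]
              apply lintegral_congr
              intro s
              rw [hdec s, ENNReal.ofReal_mul hl.le]
            rw [hcongr]
            exact mul_le_mul_right (hg₀sub t htI) _
        _ = (ENNReal.ofReal l * D) / D := by rw [hDW.2]
        _ ≤ ENNReal.ofReal l := by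
            rw [mul_div_assoc]
            exact mul_le_of_le_one_right' ENNReal.div_self_le_one
    · -- L1 part
      have hhM : ∀ᵐ t ∂(volume.restrict I),
          ENNReal.ofReal |h t| = ENNReal.ofReal l * M t := by
        filter_upwards [hae0] with t h0imp
        rcases eq_or_ne (g₀ t) 0 with hg0 | hg0
        · rw [hhdef, hM]
          simp [hg0, abs_eq_zero.mpr hg0, h0imp hg0]
        · have hg0' : ¬ (|g₀ t| = 0) := fun hc => hg0 (abs_eq_zero.mp hc)
          rw [hhdef, hM]
          simp only [if_neg hg0, if_neg hg0']
          rw [abs_of_nonneg (mul_nonneg hl.le (mul_nonneg (hΦnn _) (abs_nonneg _))),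
            ENNReal.ofReal_mul hl.le]
      calc ∫⁻ t in I, ENNReal.ofReal |h t|
          = ENNReal.ofReal l * ∫⁻ t in I, M t := by
            rw [lintegral_congr_ae hhM, lintegral_const_mul _ hMm]
        _ ≤ ENNReal.ofReal l * (1 + ENNReal.ofReal δ) := mul_le_mul_right hv'lt.le _
        _ = ENNReal.ofReal l + ENNReal.ofReal l * ENNReal.ofReal δ := by rw [mul_add, mul_one]
        _ = ENNReal.ofReal l + ↑ε := by
            rw [← ENNReal.ofReal_mul hl.le]
            congr 1
            have : l * δ = (ε : ℝ) := by rw [hδdef]; field_simp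
            rw [this, ENNReal.ofReal_coe_nnreal]
  · -- RHS ≤ LHS
    apply le_sInf
    rintro v ⟨g, h, hg, hh, hae, rfl⟩
    set m := max (MWnorm I w g) (∫⁻ t in I, ENNReal.ofReal |h t|) with hm
    apply ENNReal.le_of_forall_pos_le_add
    intro ε hε hmtop
    set l : ℝ := m.toReal + (ε:ℝ) with hldef
    have hε' : (0:ℝ) < (ε:ℝ) := by exact_mod_cast hε
    have hl : 0 < l := add_pos_of_nonneg_of_pos ENNReal.toReal_nonneg hε'
    have hofl : ENNReal.ofReal l = m + ↑ε := by
      rw [hldef, ENNReal.ofReal_add ENNReal.toReal_nonneg hε'.le,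
        ENNReal.ofReal_toReal hmtop.ne, ENNReal.ofReal_coe_nnreal]
    have hmle : m ≤ ENNReal.ofReal l := by rw [hofl]; exact le_self_add
    rw [← hofl]
    set g' : ℝ → ℝ := fun t => |g t| / l with hg'
    have hg'm : Measurable g' := hg.abs.div_const l
    have hdecg' : ∀ s, decRearr I g' s = l⁻¹ * decRearr I g s := by
      intro s
      have h1 : g' = fun t => l⁻¹ * |g t| := by
        funext t
        show |g t| / l = l⁻¹ * |g t|
        rw [div_eq_inv_mul]
      rw [h1, decRearr_smul (inv_pos.mpr hl)]
      congr 1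
      exact congrFun (decRearr_congr (fun u => abs_abs _)) s
    have hsub : Submaj I w g' := by
      intro t htI
      rcases le_or_gt t 0 with ht0 | ht0
      · rw [Set.Ioo_eq_empty (not_lt.mpr ht0)]
        simp
      · have hDW := lint_w hI hw htI ht0
        set D := ENNReal.ofReal (∫ s in Ioo 0 t, w s) with hD
        have hD0 : D ≠ 0 := ne_of_gt (ENNReal.ofReal_pos.mpr hDW.1)
        have hDt : D ≠ ⊤ := ENNReal.ofReal_ne_top
        have hMW : (∫⁻ s in Ioo (0:ℝ) t, ENNReal.ofReal (decRearr I g s)) / D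
            ≤ ENNReal.ofReal l := by
          refine le_trans ?_ (le_trans (le_max_left _ _) hmle)
          rw [MWnorm]
          exact le_iSup₂ (f := fun (t : ℝ) (_ : t ∈ I ∩ Ioi (0:ℝ)) =>
            (∫⁻ s in Ioo (0:ℝ) t, ENNReal.ofReal (decRearr I g s)) /
              ENNReal.ofReal (∫ s in Ioo 0 t, w s)) t ⟨htI, ht0⟩
        have hN : (∫⁻ s in Ioo (0:ℝ) t, ENNReal.ofReal (decRearr I g s))
            ≤ ENNReal.ofReal l * D := by
          exact (ENNReal.div_le_iff hD0 hDt).mp hMW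
        calc ∫⁻ s in Ioo (0:ℝ) t, ENNReal.ofReal (decRearr I g' s)
            = ENNReal.ofReal l⁻¹ * ∫⁻ s in Ioo (0:ℝ) t, ENNReal.ofReal (decRearr I g s) := by
              rw [← lintegral_const_mul _ ((decRearr_measurable I g).ennreal_ofReal)]
              apply lintegral_congr
              intro s
              rw [hdecg' s, ENNReal.ofReal_mul (inv_nonneg.mpr hl.le)]
          _ ≤ ENNReal.ofReal l⁻¹ * (ENNReal.ofReal l * D) := mul_le_mul_right hN _
          _ = D := by
              rw [← mul_assoc, ← ENNReal.ofReal_mul (inv_nonneg.mpr hl.le),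
                inv_mul_cancel₀ (ne_of_gt hl), ENNReal.ofReal_one, one_mul]
          _ = _ := hDW.2.symm
    refine sInf_le ⟨l, hl, ?_, rfl⟩
    refine le_trans (sInf_le ⟨g', hg'm, hsub, rfl⟩) ?_
    have hFl2 : ∀ t, decRearr I (fun s => f s / l) t = l⁻¹ * decRearr I f t := by
      intro t
      have h1 : (fun s => f s / l) = fun s => l⁻¹ * f s := by
        funext s; rw [div_eq_inv_mul]
      rw [h1, decRearr_smul (inv_pos.mpr hl)]
    have hptw : ∀ᵐ t ∂(volume.restrict I),
        phiRatio φ (decRearr I (fun s => f s / l) t) |g' t|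
          ≤ ENNReal.ofReal (|h t| * l⁻¹) := by
      filter_upwards [hae] with t htid
      rcases eq_or_ne (g t) 0 with hg0 | hg0
      · have hF0 : decRearr I f t = 0 := by
          rw [htid, rhoFun]
          simp [hg0]
        have hg'0 : |g' t| = 0 := by rw [hg']; simp [hg0]
        rw [phiRatio, hFl2 t, hF0, mul_zero]
        simp [hg'0]
      · have ha0 : 0 < |g t| := abs_pos.mpr hg0
        have habs' : |g' t| = |g t| / l := by
          rw [hg', abs_div, abs_abs, abs_of_pos hl]
        have hg'0 : ¬ (|g' t| = 0) := by
          rw [habs']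
          exact ne_of_gt (div_pos ha0 hl)
        have hu0 : 0 ≤ |h t| / |g t| := div_nonneg (abs_nonneg _) (abs_nonneg _)
        have hFdiv : decRearr I f t / |g t| = phiInv φ (|h t| / |g t|) := by
          rw [htid, rhoFun, mul_div_cancel_right₀ _ (ne_of_gt ha0)]
        rw [phiRatio, if_neg hg'0]
        have harg : decRearr I (fun s => f s / l) t / |g' t| = decRearr I f t / |g t| := by
          rw [hFl2 t, habs']
          have h1 : l ≠ 0 := ne_of_gt hl
          have h2 : |g t| ≠ 0 := ne_of_gt ha0
          field_simp
        rw [harg, hFdiv, phi_phiInv hφ hu0, habs']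
        apply le_of_eq
        congr 1
        field_simp
    calc ∫⁻ t in I, phiRatio φ (decRearr I (fun s => f s / l) t) |g' t|
        ≤ ∫⁻ t in I, ENNReal.ofReal (|h t| * l⁻¹) := lintegral_mono_ae hptw
      _ = (∫⁻ t in I, ENNReal.ofReal |h t|) * ENNReal.ofReal l⁻¹ := by
          rw [← lintegral_mul_const _ (hh.abs.ennreal_ofReal)]
          apply lintegral_congr
          intro t
          rw [ENNReal.ofReal_mul (abs_nonneg _)]
      _ ≤ ENNReal.ofReal l * ENNReal.ofReal l⁻¹ :=
          mul_le_mul_left (le_trans (le_max_right _ _) hmle) _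
      _ = 1 := by
          rw [← ENNReal.ofReal_mul hl.le, mul_inv_cancel₀ (ne_of_gt hl), ENNReal.ofReal_one]
end
end

section
/- Let w be a weight on I and let g = Σ_{i=1}^n b_i·χ_{[t_{i−1},t_i)} with b_1 ≥ b_2 ≥ … ≥ b_n > 0 and 0 = t_0 < t_1 < … < t_n < ∞, t_n ∈ I, and set G(t) = ∫₀ᵗ g. Then inf_{0 < t ≤ t_n} W(t)/G(t) = min_{1 ≤ i ≤ n} W(t_i)/G(t_i). In particular, g ≺ w if and only if G(t_i) ≤ W(t_i) for each i = 1, …, n. -/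
open MeasureTheory Set Filter
open scoped ENNReal

noncomputable section

/-!
On `[0, tₙ]` the primitive `W` of the decreasing weight is concave, while the primitive `G` of
the step function is affine on each `[tᵢ₋₁, tᵢ]`. So `W - c • G` is concave on each piece and is
nonnegative on `[0, tₙ]` as soon as it is nonnegative at the nodes. With `c = minᵢ W(tᵢ)/G(tᵢ)`
this gives the infimum. With `c = 1` it gives the submajorization criterion, because `g` is
already decreasing and right-continuous, so `g* = g`, and beyond `tₙ` the primitive `G` is constant
while `W` increases.
-/

open Topology

theorem setIntegral_Ioo_eq_intervalIntegral {f : ℝ → ℝ} {a b : ℝ} (hab : a ≤ b) :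
    ∫ x in Ioo a b, f x = ∫ x in a..b, f x := by
  rw [intervalIntegral.integral_of_le hab, integral_Ioc_eq_integral_Ioo]

theorem intervalIntegral_congr_Ioo {f g : ℝ → ℝ} {a b : ℝ} (hab : a ≤ b)
    (h : EqOn f g (Ioo a b)) :
    ∫ x in a..b, f x = ∫ x in a..b, g x := by
  rw [← setIntegral_Ioo_eq_intervalIntegral hab, ← setIntegral_Ioo_eq_intervalIntegral hab]
  exact setIntegral_congr_fun measurableSet_Ioo h

theorem concaveOn_intervalIntegral_of_antitoneOn {w : ℝ → ℝ} {a b : ℝ}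
    (hw : AntitoneOn w (Icc a b)) : ConcaveOn ℝ (Icc a b) (fun t => ∫ s in a..t, w s) := by
  have hint : ∀ {x y}, x ∈ Icc a b → y ∈ Icc a b → IntervalIntegrable w volume x y :=
    fun hx hy => (hw.mono (uIcc_subset_Icc hx hy)).intervalIntegrable
  refine concaveOn_of_slope_anti_adjacent (convex_Icc a b) fun {x y z} hx hz hxy hyz => ?_
  have hy : y ∈ Icc a b := ⟨hx.1.trans hxy.le, hyz.le.trans hz.2⟩
  have ha : a ∈ Icc a b := ⟨le_rfl, hx.1.trans hx.2⟩
  rw [intervalIntegral.integral_interval_sub_left (hint ha hz) (hint ha hy),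
    intervalIntegral.integral_interval_sub_left (hint ha hy) (hint ha hx)]
  have hyz' : ∫ s in y..z, w s ≤ (z - y) * w y := by
    simpa [mul_comm] using intervalIntegral.integral_mono_on hyz.le (hint hy hz)
      intervalIntegrable_const fun s hs => hw hy ⟨hy.1.trans hs.1, hs.2.trans hz.2⟩ hs.1
  have hxy' : (y - x) * w y ≤ ∫ s in x..y, w s := by
    simpa [mul_comm] using intervalIntegral.integral_mono_on hxy.le intervalIntegrable_const
      (hint hx hy) fun s hs => hw ⟨hx.1.trans hs.1, hs.2.trans hy.2⟩ hy hs.2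
  calc (∫ s in y..z, w s) / (z - y) ≤ w y := by rwa [div_le_iff₀ (sub_pos.2 hyz), mul_comm]
    _ ≤ (∫ s in x..y, w s) / (y - x) := by rwa [le_div_iff₀ (sub_pos.2 hxy), mul_comm]

theorem ConcaveOn.le_of_convexOn_Icc {f g : ℝ → ℝ} {a b t : ℝ}
    (hf : ConcaveOn ℝ (Icc a b) f) (hg : ConvexOn ℝ (Icc a b) g) (ha : g a ≤ f a)
    (hb : g b ≤ f b) (ht : t ∈ Icc a b) : g t ≤ f t := by
  have hab : a ≤ b := ht.1.trans ht.2
  have := (hf.sub hg).ge_on_segment (left_mem_Icc.2 hab) (right_mem_Icc.2 hab)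
    (by rwa [segment_eq_Icc hab])
  simp only [Pi.sub_apply] at this
  linarith [le_min (sub_nonneg.2 ha) (sub_nonneg.2 hb)]

theorem convexOn_affine (s : Set ℝ) (hs : Convex ℝ s) (p q : ℝ) :
    ConvexOn ℝ s (fun t => p + q * t) :=
  (convexOn_const p hs).add ((LinearMap.mulLeft ℝ q).convexOn hs)

namespace OLDomain

variable {I : Set ℝ} {t : ℝ}

theorem nonneg (hI : OLDomain I) (ht : t ∈ I) : 0 ≤ t := by
  rcases hI with rfl | ⟨α, -, rfl⟩
  exacts [ht, ht.1]

theorem Icc_subset (hI : OLDomain I) (ht : t ∈ I) : Icc 0 t ⊆ I := by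
  rcases hI with rfl | ⟨α, -, rfl⟩
  exacts [fun x hx => hx.1, fun x hx => ⟨hx.1, hx.2.trans_lt ht.2⟩]

theorem mem_nhdsGE (hI : OLDomain I) (ht : t ∈ I) : I ∈ 𝓝[≥] t := by
  rcases hI with rfl | ⟨α, -, rfl⟩
  exacts [mem_of_superset self_mem_nhdsWithin (Ici_subset_Ici.2 ht),
    mem_of_superset (Ico_mem_nhdsGE ht.2) (Ico_subset_Ico_left ht.1)]

end OLDomain

theorem IsWeight.setIntegral_Ioo_mono {I : Set ℝ} {w : ℝ → ℝ} (hw : IsWeight I w)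
    (hI : OLDomain I) {s t : ℝ} (ht : t ∈ I) (hst : s ≤ t) :
    ∫ x in Ioo 0 s, w x ≤ ∫ x in Ioo 0 t, w x :=
  setIntegral_mono_set (hw.2.2 t ht) (ae_restrict_of_forall_mem measurableSet_Ioo
    fun x hx => (hw.1 x (hI.Icc_subset ht ⟨hx.1.le, hx.2.le⟩)).le)
    (Ioo_subset_Ioo_right hst).eventuallyLE

section Rearrangement

variable {I : Set ℝ} {f : ℝ → ℝ} {s : ℝ}

theorem volume_superlevel_le_of_antitoneOn (hneg : ∀ x < 0, f x = 0) (hnn : ∀ x, 0 ≤ f x)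
    (hf : AntitoneOn f (Ici 0)) (hs : 0 ≤ s) {l : ℝ} (hl : f s ≤ l) :
    volume {x | x ∈ I ∧ l < |f x|} ≤ ENNReal.ofReal s := by
  have hsub : {x | x ∈ I ∧ l < |f x|} ⊆ Ico 0 s := by
    rintro x ⟨-, hx⟩
    rw [abs_of_nonneg (hnn x)] at hx
    by_contra hxs
    rcases lt_or_ge x 0 with hx0 | hx0
    · linarith [hneg x hx0, hnn s]
    · exact (hf hs hx0 (not_lt.1 fun h => hxs ⟨hx0, h⟩)).not_gt (hl.trans_lt hx)
  simpa using measure_mono (μ := volume) hsub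

theorem decRearr_le_of_antitoneOn (hneg : ∀ x < 0, f x = 0) (hnn : ∀ x, 0 ≤ f x)
    (hf : AntitoneOn f (Ici 0)) (hs : 0 ≤ s) : decRearr I f s ≤ f s := by
  unfold decRearr
  refine le_of_forall_gt_imp_ge_of_dense fun l hl => csInf_le ?_ ?_
  · exact ⟨0, fun _ h => h.1.le⟩
  · exact ⟨(hnn s).trans_lt hl, volume_superlevel_le_of_antitoneOn hneg hnn hf hs hl.le⟩

theorem decRearr_eq_of_antitoneOn (hI : OLDomain I) (hneg : ∀ x < 0, f x = 0)
    (hnn : ∀ x, 0 ≤ f x) (hf : AntitoneOn f (Ici 0))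
    (hlsc : LowerSemicontinuousWithinAt f (Ici s) s) (hs : s ∈ I) : decRearr I f s = f s := by
  have hs0 := hI.nonneg hs
  refine (decRearr_le_of_antitoneOn hneg hnn hf hs0).antisymm (le_csInf
    ⟨f s + 1, by positivity [hnn s],
      volume_superlevel_le_of_antitoneOn hneg hnn hf hs0 (by linarith)⟩ ?_)
  rintro l ⟨-, hvol⟩
  by_contra! hl
  obtain ⟨u, hsu, hu⟩ := mem_nhdsGE_iff_exists_Ico_subset.1 ((hlsc l hl).and (hI.mem_nhdsGE hs))
  have hsub : Ico 0 u ⊆ {x | x ∈ I ∧ l < |f x|} := by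
    intro x hx
    rcases lt_or_ge x s with hxs | hxs
    · exact ⟨hI.Icc_subset hs ⟨hx.1, hxs.le⟩,
        hl.trans_le ((hf hx.1 hs0 hxs.le).trans (le_abs_self _))⟩
    · exact ⟨(hu ⟨hxs, hx.2⟩).2, (hu ⟨hxs, hx.2⟩).1.trans_le (le_abs_self _)⟩
  have := (measure_mono (μ := volume) hsub).trans hvol
  rw [Real.volume_Ico, sub_zero, ENNReal.ofReal_le_ofReal_iff hs0] at this
  exact this.not_gt hsu

end Rearrangement

theorem lowerSemicontinuousWithinAt_indicator_Ico {a d c : ℝ} (hc : 0 ≤ c) (s : ℝ) :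
    LowerSemicontinuousWithinAt ((Ico a d).indicator fun _ => c) (Ici s) s := by
  intro y hy
  by_cases hs : s ∈ Ico a d
  · rw [indicator_of_mem hs] at hy
    filter_upwards [Ico_mem_nhdsGE hs.2] with x hx
    rwa [indicator_of_mem (show x ∈ Ico a d from ⟨hs.1.trans hx.1, hx.2⟩)]
  · rw [indicator_of_notMem hs] at hy
    exact Eventually.of_forall fun x => hy.trans_le (indicator_nonneg (fun _ _ => hc) x)

section StepFunction

variable {n : ℕ} {tt : Fin (n + 1) → ℝ} {b : Fin n → ℝ} {s t : ℝ}

theorem stepFun_eq_sum_indicator :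
    stepFun n tt b =
      fun s => ∑ i, (Ico (tt i.castSucc) (tt i.succ)).indicator (fun _ => b i) s := by
  ext s
  simp only [stepFun, indicator_apply, mem_Ico]

theorem stepFun_nonneg (hb : ∀ i, 0 ≤ b i) (s : ℝ) : 0 ≤ stepFun n tt b s := by
  rw [stepFun_eq_sum_indicator]
  exact Finset.sum_nonneg fun i _ => indicator_nonneg (fun _ _ => hb i) s

theorem stepFun_eq_of_mem_Ico (htt : Monotone tt) {i : Fin n}
    (hs : s ∈ Ico (tt i.castSucc) (tt i.succ)) : stepFun n tt b s = b i := by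
  rw [stepFun, Finset.sum_eq_single i (fun j _ hji => if_neg ?_) (by simp), if_pos ⟨hs.1, hs.2⟩]
  rintro ⟨hj1, hj2⟩
  rcases hji.lt_or_gt with hji | hij
  · exact (hj2.trans_le (htt (Fin.succ_le_castSucc_iff.2 hji))).not_ge hs.1
  · exact (hs.2.trans_le (htt (Fin.succ_le_castSucc_iff.2 hij))).not_ge hj1

theorem stepFun_eq_zero_of_notMem (htt : Monotone tt) (hs : s ∉ Ico (tt 0) (tt (Fin.last n))) :
    stepFun n tt b s = 0 :=
  Finset.sum_eq_zero fun _ _ => if_neg fun h =>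
    hs ⟨(htt (Fin.zero_le _)).trans h.1, h.2.trans_le (htt (Fin.le_last _))⟩

theorem exists_mem_Ico_of_mem_Ico (hs : s ∈ Ico (tt 0) (tt (Fin.last n))) :
    ∃ i : Fin n, s ∈ Ico (tt i.castSucc) (tt i.succ) := by
  classical
  let S := Finset.univ.filter fun j => tt j ≤ s
  have hS : S.Nonempty := ⟨0, by simp [S, hs.1]⟩
  obtain ⟨i, hi⟩ : ∃ i : Fin n, i.castSucc = S.max' hS := by
    refine Fin.exists_castSucc_eq.2 fun h => ?_
    exact (h ▸ (Finset.mem_filter.1 (S.max'_mem hS)).2).not_gt hs.2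
  refine ⟨i, hi.symm ▸ (Finset.mem_filter.1 (S.max'_mem hS)).2, not_le.1 fun h => ?_⟩
  exact (S.le_max' i.succ (by simp [S, h])).not_gt (hi.symm ▸ Fin.castSucc_lt_succ)

theorem exists_mem_Ioc_of_mem_Ioc (ht : t ∈ Ioc (tt 0) (tt (Fin.last n))) :
    ∃ i : Fin n, t ∈ Ioc (tt i.castSucc) (tt i.succ) := by
  classical
  let S := Finset.univ.filter fun j => t ≤ tt j
  have hS : S.Nonempty := ⟨Fin.last n, by simp [S, ht.2]⟩
  obtain ⟨i, hi⟩ : ∃ i : Fin n, i.succ = S.min' hS := by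
    refine Fin.exists_succ_eq.2 fun h => ?_
    exact (h ▸ (Finset.mem_filter.1 (S.min'_mem hS)).2).not_gt ht.1
  refine ⟨i, not_le.1 fun h => ?_, hi.symm ▸ (Finset.mem_filter.1 (S.min'_mem hS)).2⟩
  exact (S.min'_le i.castSucc (by simp [S, h])).not_gt (hi.symm ▸ Fin.castSucc_lt_succ)

theorem antitoneOn_stepFun (htt : Monotone tt) (hb : Antitone b) (hb0 : ∀ i, 0 ≤ b i) :
    AntitoneOn (stepFun n tt b) (Ici (tt 0)) := by
  intro x hx y hy hxy
  by_cases hyT : y < tt (Fin.last n)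
  · obtain ⟨i, hi⟩ := exists_mem_Ico_of_mem_Ico ⟨hx, hxy.trans_lt hyT⟩
    obtain ⟨j, hj⟩ := exists_mem_Ico_of_mem_Ico ⟨hy, hyT⟩
    rw [stepFun_eq_of_mem_Ico htt hi, stepFun_eq_of_mem_Ico htt hj]
    refine hb (not_lt.1 fun hji => ?_)
    exact (hj.2.trans_le (htt (Fin.succ_le_castSucc_iff.2 hji))).not_ge (hi.1.trans hxy)
  · rw [stepFun_eq_zero_of_notMem htt fun h => hyT h.2]
    exact stepFun_nonneg hb0 x

theorem lowerSemicontinuousWithinAt_stepFun (hb : ∀ i, 0 ≤ b i) (s : ℝ) :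
    LowerSemicontinuousWithinAt (stepFun n tt b) (Ici s) s := by
  rw [stepFun_eq_sum_indicator]
  exact lowerSemicontinuousWithinAt_sum fun i _ =>
    lowerSemicontinuousWithinAt_indicator_Ico (hb i) s

theorem integrable_stepFun : Integrable (stepFun n tt b) := by
  rw [stepFun_eq_sum_indicator]
  exact integrable_finsetSum _ fun i _ =>
    (integrableOn_const (by simp)).integrable_indicator measurableSet_Ico

theorem decRearr_stepFun {I : Set ℝ} (hI : OLDomain I) (htt0 : tt 0 = 0) (htt : Monotone tt)
    (hb : Antitone b) (hb0 : ∀ i, 0 ≤ b i) (hs : s ∈ I) :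
    decRearr I (stepFun n tt b) s = stepFun n tt b s := by
  refine decRearr_eq_of_antitoneOn hI
    (fun x hx => stepFun_eq_zero_of_notMem htt fun h => (htt0 ▸ h.1).not_gt hx)
    (stepFun_nonneg hb0) (htt0 ▸ antitoneOn_stepFun htt hb hb0)
    (lowerSemicontinuousWithinAt_stepFun hb0 s) hs

theorem intervalIntegral_stepFun_of_mem_Icc (htt : Monotone tt) (a : ℝ) {i : Fin n}
    (ht : t ∈ Icc (tt i.castSucc) (tt i.succ)) :
    ∫ x in a..t, stepFun n tt b x =
      (∫ x in a..tt i.castSucc, stepFun n tt b x) + b i * (t - tt i.castSucc) := by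
  rw [← intervalIntegral.integral_add_adjacent_intervals (integrable_stepFun.intervalIntegrable)
    integrable_stepFun.intervalIntegrable,
    intervalIntegral_congr_Ioo ht.1 fun x hx =>
      stepFun_eq_of_mem_Ico htt ⟨hx.1.le, hx.2.trans_le ht.2⟩,
    intervalIntegral.integral_const, smul_eq_mul, mul_comm]

theorem setIntegral_stepFun_of_le (htt : Monotone tt) (a : ℝ) (ht : tt (Fin.last n) ≤ t) :
    ∫ x in Ioo a t, stepFun n tt b x = ∫ x in Ioo a (tt (Fin.last n)), stepFun n tt b x :=
  setIntegral_eq_of_subset_of_forall_sdiff_eq_zero measurableSet_Ioo (Ioo_subset_Ioo_right ht)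
    fun _ hx => stepFun_eq_zero_of_notMem htt fun h => hx.2 ⟨hx.1.1, h.2⟩

theorem setIntegral_stepFun_pos (htt0 : tt 0 = 0) (htt : Monotone tt) (hb : ∀ i, 0 < b i)
    (ht : t ∈ Ioc 0 (tt (Fin.last n))) : 0 < ∫ x in Ioo 0 t, stepFun n tt b x := by
  obtain ⟨i, hi⟩ := exists_mem_Ioc_of_mem_Ioc (htt0 ▸ ht)
  have ha : 0 ≤ tt i.castSucc := htt0 ▸ htt (Fin.zero_le _)
  rw [setIntegral_Ioo_eq_intervalIntegral ht.1.le,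
    intervalIntegral_stepFun_of_mem_Icc htt 0 ⟨hi.1.le, hi.2⟩]
  have hG : 0 ≤ ∫ x in 0..tt i.castSucc, stepFun n tt b x :=
    intervalIntegral.integral_nonneg ha fun x _ => stepFun_nonneg (fun i => (hb i).le) x
  nlinarith [hb i, hi.1]

end StepFunction

section Submajorization

variable {n : ℕ} {tt : Fin (n + 1) → ℝ} {b : Fin n → ℝ} {w : ℝ → ℝ}

theorem mul_setIntegral_stepFun_le_of_nodes (htt0 : tt 0 = 0) (htt : Monotone tt)
    (hw : AntitoneOn w (Icc 0 (tt (Fin.last n)))) {c : ℝ}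
    (hc : ∀ i : Fin n,
      c * ∫ x in Ioo 0 (tt i.succ), stepFun n tt b x ≤ ∫ x in Ioo 0 (tt i.succ), w x)
    {t : ℝ} (ht : t ∈ Icc 0 (tt (Fin.last n))) :
    c * ∫ x in Ioo 0 t, stepFun n tt b x ≤ ∫ x in Ioo 0 t, w x := by
  have htt_nonneg : ∀ j, 0 ≤ tt j := fun j => htt0 ▸ htt (Fin.zero_le j)
  rw [setIntegral_Ioo_eq_intervalIntegral ht.1, setIntegral_Ioo_eq_intervalIntegral ht.1]
  replace hc : ∀ j, c * ∫ x in 0..tt j, stepFun n tt b x ≤ ∫ x in 0..tt j, w x := by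
    refine Fin.cases (by simp [htt0]) fun i => ?_
    simpa only [setIntegral_Ioo_eq_intervalIntegral (htt_nonneg _)] using hc i
  rcases ht.1.eq_or_lt with rfl | ht0
  · simp
  obtain ⟨i, hi⟩ := exists_mem_Ioc_of_mem_Ioc (htt0 ▸ ⟨ht0, ht.2⟩ : t ∈ Ioc (tt 0) _)
  have hW : ConcaveOn ℝ (Icc (tt i.castSucc) (tt i.succ)) fun u => ∫ x in 0..u, w x :=
    (concaveOn_intervalIntegral_of_antitoneOn hw).subset
      (Icc_subset_Icc (htt_nonneg _) (htt (Fin.le_last _))) (convex_Icc _ _)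
  have hG : ConvexOn ℝ (Icc (tt i.castSucc) (tt i.succ))
      fun u => c * ∫ x in 0..u, stepFun n tt b x := by
    refine (convexOn_affine _ (convex_Icc _ _) (c * ((∫ x in 0..tt i.castSucc, stepFun n tt b x)
      - b i * tt i.castSucc)) (c * b i)).congr fun u hu => ?_
    rw [intervalIntegral_stepFun_of_mem_Icc htt 0 hu]
    ring
  exact hW.le_of_convexOn_Icc hG (hc _) (hc _) ⟨hi.1.le, hi.2⟩

theorem submaj_stepFun_iff {I : Set ℝ} (hI : OLDomain I) (hw : IsWeight I w) (htt0 : tt 0 = 0)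
    (htt : Monotone tt) (hb : Antitone b) (hb0 : ∀ i, 0 ≤ b i) :
    Submaj I w (stepFun n tt b) ↔
      ∀ t ∈ I, ∫ x in Ioo 0 t, stepFun n tt b x ≤ ∫ x in Ioo 0 t, w x := by
  refine forall₂_congr fun t ht => ?_
  have hw0 : ∀ x ∈ Ioo 0 t, 0 ≤ w x := fun x hx =>
    (hw.1 x (hI.Icc_subset ht ⟨hx.1.le, hx.2.le⟩)).le
  rw [setLIntegral_congr_fun measurableSet_Ioo fun x hx => by
      rw [decRearr_stepFun hI htt0 htt hb hb0 (hI.Icc_subset ht ⟨hx.1.le, hx.2.le⟩)],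
    ← ofReal_integral_eq_lintegral_ofReal integrable_stepFun.integrableOn
      (Eventually.of_forall (stepFun_nonneg hb0)),
    ← ofReal_integral_eq_lintegral_ofReal (hw.2.2 t ht)
      (ae_restrict_of_forall_mem measurableSet_Ioo hw0),
    ENNReal.ofReal_le_ofReal_iff (setIntegral_nonneg measurableSet_Ioo hw0)]

end Submajorization

theorem statement8_general (I : Set ℝ) (hI : OLDomain I) (w : ℝ → ℝ) (hw : IsWeight I w)
    (n : ℕ) (tt : Fin (n+1) → ℝ) (b : Fin n → ℝ)
    (htt0 : tt 0 = 0) (httm : StrictMono tt) (httI : tt (Fin.last n) ∈ I)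
    (hb : Antitone b) (hbpos : ∀ i, 0 < b i) :
    (sInf ((fun t => (∫ s in Ioo (0:ℝ) t, w s) / ∫ s in Ioo (0:ℝ) t, stepFun n tt b s) ''
          Ioc 0 (tt (Fin.last n)))
        = ⨅ i : Fin n, (∫ s in Ioo (0:ℝ) (tt i.succ), w s) /
            ∫ s in Ioo (0:ℝ) (tt i.succ), stepFun n tt b s) ∧
    (Submaj I w (stepFun n tt b) ↔
      ∀ i : Fin n, (∫ s in Ioo (0:ℝ) (tt i.succ), stepFun n tt b s)
          ≤ ∫ s in Ioo (0:ℝ) (tt i.succ), w s) := by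
  have htt := httm.monotone
  have hnode (i : Fin n) : tt i.succ ∈ Ioc 0 (tt (Fin.last n)) :=
    ⟨htt0 ▸ httm (Fin.succ_pos i), htt (Fin.le_last _)⟩
  have hwT : AntitoneOn w (Icc 0 (tt (Fin.last n))) := hw.2.1.mono (hI.Icc_subset httI)
  constructor
  · rcases n.eq_zero_or_pos with rfl | hn
    · simp [htt0, Real.iInf_of_isEmpty]
    have : Nonempty (Fin n) := ⟨⟨0, hn⟩⟩
    obtain ⟨i₀, hi₀⟩ := exists_eq_ciInf_of_finite (f := fun i : Fin n =>
      (∫ s in Ioo (0:ℝ) (tt i.succ), w s) / ∫ s in Ioo (0:ℝ) (tt i.succ), stepFun n tt b s)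
    rw [← hi₀]
    refine IsLeast.csInf_eq ⟨mem_image_of_mem _ (hnode i₀), ?_⟩
    rintro _ ⟨t, ht, rfl⟩
    rw [le_div_iff₀ (setIntegral_stepFun_pos htt0 htt hbpos ht)]
    refine mul_setIntegral_stepFun_le_of_nodes htt0 htt hwT (fun i => ?_) ⟨ht.1.le, ht.2⟩
    rw [← le_div_iff₀ (setIntegral_stepFun_pos htt0 htt hbpos (hnode i)), hi₀]
    exact ciInf_le (Set.finite_range _).bddBelow i
  · rw [submaj_stepFun_iff hI hw htt0 htt hb fun i => (hbpos i).le]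
    refine ⟨fun h i => h _ (hI.Icc_subset httI ⟨(hnode i).1.le, (hnode i).2⟩),
      fun h t ht => ?_⟩
    have hGW {t} (ht : t ∈ Icc 0 (tt (Fin.last n))) :
        ∫ x in Ioo 0 t, stepFun n tt b x ≤ ∫ x in Ioo 0 t, w x := by
      simpa using mul_setIntegral_stepFun_le_of_nodes htt0 htt hwT (c := 1) (by simpa using h) ht
    rcases le_or_gt t (tt (Fin.last n)) with htT | hTt
    · exact hGW ⟨hI.nonneg ht, htT⟩
    calc ∫ x in Ioo 0 t, stepFun n tt b x = ∫ x in Ioo 0 (tt (Fin.last n)), stepFun n tt b x :=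
          setIntegral_stepFun_of_le htt 0 hTt.le
      _ ≤ ∫ x in Ioo 0 (tt (Fin.last n)), w x := hGW ⟨hI.nonneg httI, le_rfl⟩
      _ ≤ ∫ x in Ioo 0 t, w x := hw.setIntegral_Ioo_mono hI ht hTt.le

theorem statement8 (I : Set ℝ) (hI : OLDomain I) (w : ℝ → ℝ) (hw : IsWeight I w)
    (n : ℕ) (hn : 0 < n) (tt : Fin (n+1) → ℝ) (b : Fin n → ℝ)
    (htt0 : tt 0 = 0) (httm : StrictMono tt) (httI : tt (Fin.last n) ∈ I)
    (hb : Antitone b) (hbpos : ∀ i, 0 < b i) :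
    (sInf ((fun t => (∫ s in Ioo (0:ℝ) t, w s) / ∫ s in Ioo (0:ℝ) t, stepFun n tt b s) ''
          Ioc 0 (tt (Fin.last n)))
        = ⨅ i : Fin n, (∫ s in Ioo (0:ℝ) (tt i.succ), w s) /
            ∫ s in Ioo (0:ℝ) (tt i.succ), stepFun n tt b s) ∧
    (Submaj I w (stepFun n tt b) ↔
      ∀ i : Fin n, (∫ s in Ioo (0:ℝ) (tt i.succ), stepFun n tt b s)
          ≤ ∫ s in Ioo (0:ℝ) (tt i.succ), w s) :=
  statement8_general I hI w hw n tt b htt0 httm httI hb hbpos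
end
end
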